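/- arXiv:2510.10080 — 2 statements merged into one kernel-verified Lean document; each statement's English description precedes it below -/
import Mathlib

section
/- The matching distance d_{ℕ[X]} on the space of finite multisets of a pointed metric space (X,e) is well defined (independent of padding with copies of the basepoint) and is a metric. -/
/-!
Matchings compose: given matchings of `s` with `t` and of `t` with `u`, pad both with copies
of `e` until their middle columns are permutations of one list, reorder the second matching
along that permutation and apply the triangle inequality pair by pair. For definiteness, all
points involved lie in a finite set whose distinct points are at distance at least some
`δ > 0`, so a matching of cost below `δ` pairs every point with itself.
-/

open Multiset Metric

variable {X : Type*}

/-- Matching distance on finite multisets of a pointed metric space `(X, e)`: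
pad both sides with copies of the basepoint and take the infimum over all matchings. -/
noncomputable def dN [MetricSpace X] (e : X) (s t : Multiset X) : ℝ :=
  sInf { c : ℝ | ∃ (l₁ l₂ : List X) (k j : ℕ),
    l₁.length = l₂.length ∧
    (↑l₁ : Multiset X) = s + Multiset.replicate k e ∧
    (↑l₂ : Multiset X) = t + Multiset.replicate j e ∧
    c = (List.zipWith dist l₁ l₂).sum }

theorem List.Perm.exists_perm_zipWith_perm {α β γ : Type*} (f : α → β → γ) {b c : List α}
    (h : b.Perm c) (d : List β) (hd : c.length = d.length) :
    ∃ d', d'.Perm d ∧ (List.zipWith f b d').Perm (List.zipWith f c d) := by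
  induction h generalizing d with
  | nil => exact ⟨d, .refl _, .refl _⟩
  | cons x _ ih =>
    obtain _ | ⟨y, d⟩ := d
    · simp at hd
    obtain ⟨d', hd', hf⟩ := ih d (by simpa using hd)
    exact ⟨y :: d', hd'.cons y, hf.cons _⟩
  | swap x y l =>
    obtain _ | ⟨d₁, _ | ⟨d₂, d⟩⟩ := d
    · simp at hd
    · simp at hd
    exact ⟨d₂ :: d₁ :: d, .swap _ _ _, .swap _ _ _⟩
  | trans _ h₂₃ ih₁₂ ih₂₃ =>
    obtain ⟨d', hd', hf⟩ := ih₂₃ d hd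
    obtain ⟨d'', hd'', hf'⟩ := ih₁₂ d' (by rw [h₂₃.length_eq, hd, hd'.length_eq])
    exact ⟨d'', hd''.trans hd', hf'.trans hf⟩

theorem Set.Finite.exists_pos_forall_le_dist [MetricSpace X] {S : Set X} (hS : S.Finite) :
    ∃ δ > 0, ∀ x ∈ S, ∀ y ∈ S, x ≠ y → δ ≤ dist x y := by
  by_cases hS' : S.Nontrivial
  · exact ⟨S.infsep, hS.infsep_pos_iff_nontrivial.2 hS',
      fun x hx y hy hxy => Set.infsep_le_dist_of_mem hx hy hxy⟩
  · exact ⟨1, one_pos, fun x hx y hy hxy =>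
      absurd (Set.not_nontrivial_iff.1 hS' hx hy) hxy⟩

section MatchingCost

variable [PseudoMetricSpace X]

theorem sum_zipWith_dist_nonneg (l₁ l₂ : List X) : 0 ≤ (List.zipWith dist l₁ l₂).sum := by
  induction l₁ generalizing l₂ with
  | nil => simp
  | cons a l₁ ih => cases l₂ <;> simp [add_nonneg dist_nonneg (ih _)]

theorem sum_zipWith_dist_comm (l₁ l₂ : List X) :
    (List.zipWith dist l₁ l₂).sum = (List.zipWith dist l₂ l₁).sum := by
  rw [List.zipWith_comm_of_comm dist_comm]

@[simp]
theorem sum_zipWith_dist_self (l : List X) : (List.zipWith dist l l).sum = 0 := by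
  induction l <;> simp [*]

theorem sum_zipWith_dist_append_self {l₁ l₂ : List X} (h : l₁.length = l₂.length)
    (l : List X) :
    (List.zipWith dist (l₁ ++ l) (l₂ ++ l)).sum = (List.zipWith dist l₁ l₂).sum := by
  simp [List.zipWith_append h]

theorem sum_zipWith_dist_le_add :
    ∀ {l₁ l₂ l₃ : List X}, l₁.length = l₂.length → l₂.length = l₃.length →
      (List.zipWith dist l₁ l₃).sum ≤
        (List.zipWith dist l₁ l₂).sum + (List.zipWith dist l₂ l₃).sum
  | [], [], [], _, _ => by simp
  | a :: l₁, b :: l₂, c :: l₃, h₁₂, h₂₃ => by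
    have := sum_zipWith_dist_le_add (l₁ := l₁) (l₂ := l₂) (l₃ := l₃)
      (by simpa using h₁₂) (by simpa using h₂₃)
    simp only [List.zipWith_cons_cons, List.sum_cons]
    linarith [dist_triangle a b c]

end MatchingCost

theorem eq_of_sum_zipWith_dist_lt [MetricSpace X] {S : Set X} {δ : ℝ}
    (hδ : ∀ x ∈ S, ∀ y ∈ S, x ≠ y → δ ≤ dist x y) :
    ∀ {l₁ l₂ : List X}, l₁.length = l₂.length → (∀ x ∈ l₁, x ∈ S) → (∀ y ∈ l₂, y ∈ S) →
      (List.zipWith dist l₁ l₂).sum < δ → l₁ = l₂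
  | [], [], _, _, _, _ => rfl
  | a :: l₁, b :: l₂, hl, h₁, h₂, hlt => by
    simp only [List.zipWith_cons_cons, List.sum_cons] at hlt
    have hrest := sum_zipWith_dist_nonneg l₁ l₂
    have hab : a = b := by
      by_contra hab
      linarith [hδ a (h₁ a (by simp)) b (h₂ b (by simp)) hab]
    have hl₁₂ : l₁ = l₂ := eq_of_sum_zipWith_dist_lt hδ (by simpa using hl)
      (fun x hx => h₁ x (by simp [hx])) (fun y hy => h₂ y (by simp [hy]))
      (by linarith [dist_nonneg (x := a) (y := b)])
    rw [hab, hl₁₂]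

section MatchingCosts

variable [PseudoMetricSpace X] (e : X)

def matchingCosts (s t : Multiset X) : Set ℝ :=
  { c : ℝ | ∃ (l₁ l₂ : List X) (k j : ℕ),
    l₁.length = l₂.length ∧
    (↑l₁ : Multiset X) = s + Multiset.replicate k e ∧
    (↑l₂ : Multiset X) = t + Multiset.replicate j e ∧
    c = (List.zipWith dist l₁ l₂).sum }

theorem matchingCosts_nonempty (s t : Multiset X) : (matchingCosts e s t).Nonempty :=
  ⟨_, s.toList ++ List.replicate (card t) e, t.toList ++ List.replicate (card s) e,
    card t, card s, by simp [add_comm], by rw [← coe_add, coe_toList, coe_replicate],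
    by rw [← coe_add, coe_toList, coe_replicate], rfl⟩

theorem nonneg_of_mem_matchingCosts {s t : Multiset X} {c : ℝ}
    (hc : c ∈ matchingCosts e s t) : 0 ≤ c := by
  obtain ⟨l₁, l₂, -, -, -, -, -, rfl⟩ := hc
  exact sum_zipWith_dist_nonneg l₁ l₂

theorem matchingCosts_comm (s t : Multiset X) : matchingCosts e s t = matchingCosts e t s := by
  ext c
  constructor <;> rintro ⟨l₁, l₂, k, j, hl, h₁, h₂, rfl⟩ <;>
    exact ⟨l₂, l₁, j, k, hl.symm, h₂, h₁, sum_zipWith_dist_comm _ _⟩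

theorem matchingCosts_add_singleton_left (s t : Multiset X) :
    matchingCosts e (s + {e}) t = matchingCosts e s t := by
  ext c
  constructor
  · rintro ⟨l₁, l₂, k, j, hl, h₁, h₂, rfl⟩
    refine ⟨l₁, l₂, k + 1, j, hl, ?_, h₂, rfl⟩
    rw [h₁, add_assoc, singleton_add, ← replicate_succ]
  · rintro ⟨l₁, l₂, k, j, hl, h₁, h₂, rfl⟩
    refine ⟨l₁ ++ [e], l₂ ++ [e], k, j + 1, by simp [hl], ?_, ?_,
      (sum_zipWith_dist_append_self hl _).symm⟩
    · rw [← coe_add, h₁, add_right_comm]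
      rfl
    · rw [← coe_add, h₂, replicate_add, replicate_one, add_assoc]
      rfl

theorem exists_mem_matchingCosts_le_add {s t u : Multiset X} {a b : ℝ}
    (ha : a ∈ matchingCosts e s t) (hb : b ∈ matchingCosts e t u) :
    ∃ c ∈ matchingCosts e s u, c ≤ a + b := by
  obtain ⟨l₁, l₂, k, j, hl, h₁, h₂, rfl⟩ := ha
  obtain ⟨m₂, m₃, k', j', hm, h₂', h₃, rfl⟩ := hb
  have hperm : (l₂ ++ List.replicate k' e).Perm (m₂ ++ List.replicate j e) := by
    rw [← Multiset.coe_eq_coe, ← coe_add, ← coe_add, h₂, h₂', coe_replicate, coe_replicate,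
      add_assoc, add_assoc, ← replicate_add, ← replicate_add, add_comm j]
  obtain ⟨m₃', hm₃', hsum⟩ := hperm.exists_perm_zipWith_perm dist
    (m₃ ++ List.replicate j e) (by simp [hm])
  have hlen₁ : (l₁ ++ List.replicate k' e).length = (l₂ ++ List.replicate k' e).length := by
    simp [hl]
  have hlen₂ : (l₂ ++ List.replicate k' e).length = m₃'.length := by
    rw [hperm.length_eq, hm₃'.length_eq]
    simp [hm]
  refine ⟨_, ⟨_, m₃', k + k', j' + j, hlen₁.trans hlen₂, ?_, ?_, rfl⟩, ?_⟩
  · rw [← coe_add, h₁, coe_replicate, add_assoc, ← replicate_add]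
  · rw [Multiset.coe_eq_coe.2 hm₃', ← coe_add, h₃, coe_replicate, add_assoc, ← replicate_add]
  · calc _ ≤ (List.zipWith dist (l₁ ++ List.replicate k' e) (l₂ ++ List.replicate k' e)).sum
          + (List.zipWith dist (l₂ ++ List.replicate k' e) m₃').sum :=
            sum_zipWith_dist_le_add hlen₁ hlen₂
      _ = _ := by
        rw [sum_zipWith_dist_append_self hl, hsum.sum_eq, sum_zipWith_dist_append_self hm]

theorem zero_mem_matchingCosts {s t : Multiset X} {k j : ℕ}
    (h : s + replicate k e = t + replicate j e) : 0 ∈ matchingCosts e s t :=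
  ⟨(s + replicate k e).toList, (s + replicate k e).toList, k, j, rfl, by simp, by simp [h],
    (sum_zipWith_dist_self _).symm⟩

end MatchingCosts

section MatchingDistance

variable [MetricSpace X] (e : X)

theorem dN_eq_sInf_matchingCosts (s t : Multiset X) :
    dN e s t = sInf (matchingCosts e s t) := rfl

theorem dN_le_of_mem_matchingCosts {s t : Multiset X} {c : ℝ}
    (hc : c ∈ matchingCosts e s t) : dN e s t ≤ c :=
  csInf_le ⟨0, fun _ => nonneg_of_mem_matchingCosts e⟩ hc

theorem le_dN_of_forall_le {s t : Multiset X} {a : ℝ}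
    (h : ∀ c ∈ matchingCosts e s t, a ≤ c) : a ≤ dN e s t :=
  le_csInf (matchingCosts_nonempty e s t) h

theorem dN_nonneg (s t : Multiset X) : 0 ≤ dN e s t :=
  le_dN_of_forall_le e fun _ => nonneg_of_mem_matchingCosts e

theorem dN_comm (s t : Multiset X) : dN e s t = dN e t s := by
  rw [dN_eq_sInf_matchingCosts, matchingCosts_comm, dN_eq_sInf_matchingCosts]

theorem dN_add_singleton_left (s t : Multiset X) : dN e (s + {e}) t = dN e s t := by
  rw [dN_eq_sInf_matchingCosts, matchingCosts_add_singleton_left, dN_eq_sInf_matchingCosts]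

theorem dN_triangle (s t u : Multiset X) : dN e s u ≤ dN e s t + dN e t u := by
  have hab : ∀ a ∈ matchingCosts e s t, ∀ b ∈ matchingCosts e t u, dN e s u ≤ a + b :=
    fun a ha b hb =>
      let ⟨_, hc, hcab⟩ := exists_mem_matchingCosts_le_add e ha hb
      (dN_le_of_mem_matchingCosts e hc).trans hcab
  have hb : ∀ b ∈ matchingCosts e t u, dN e s u - b ≤ dN e s t := fun b hb =>
    le_dN_of_forall_le e fun a ha => by linarith [hab a ha b hb]
  have : dN e s u - dN e s t ≤ dN e t u :=
    le_dN_of_forall_le e fun b hb' => by linarith [hb b hb']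
  linarith

theorem exists_add_replicate_eq_of_dN_eq_zero {s t : Multiset X} (h : dN e s t = 0) :
    ∃ k j : ℕ, s + replicate k e = t + replicate j e := by
  obtain ⟨δ, hδ, hsep⟩ := (e ::ₘ (s + t)).finite_toSet.exists_pos_forall_le_dist
  obtain ⟨c, hc, hcδ⟩ := exists_lt_of_csInf_lt (matchingCosts_nonempty e s t)
    (show dN e s t < δ by rwa [h])
  obtain ⟨l₁, l₂, k, j, hl, h₁, h₂, rfl⟩ := hc
  have hl₁ : ∀ x ∈ l₁, x ∈ {x | x ∈ e ::ₘ (s + t)} := fun x hx => by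
    have : x ∈ (l₁ : Multiset X) := hx
    simp only [h₁, Set.mem_ofPred_eq, mem_cons, mem_add, mem_replicate] at this ⊢
    tauto
  have hl₂ : ∀ x ∈ l₂, x ∈ {x | x ∈ e ::ₘ (s + t)} := fun x hx => by
    have : x ∈ (l₂ : Multiset X) := hx
    simp only [h₂, Set.mem_ofPred_eq, mem_cons, mem_add, mem_replicate] at this ⊢
    tauto
  refine ⟨k, j, ?_⟩
  rw [← h₁, ← h₂, eq_of_sum_zipWith_dist_lt hsep hl hl₁ hl₂ hcδ]

theorem dN_eq_zero_iff (s t : Multiset X) :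
    dN e s t = 0 ↔ ∃ k j : ℕ, s + replicate k e = t + replicate j e :=
  ⟨exists_add_replicate_eq_of_dN_eq_zero e, fun ⟨_, _, h⟩ =>
    (dN_le_of_mem_matchingCosts e (zero_mem_matchingCosts e h)).antisymm (dN_nonneg e s t)⟩

end MatchingDistance

/-- The matching distance `d_{ℕ[X]}` is well defined (unchanged under padding either
argument with a copy of the basepoint) and is a metric on the space of finite multisets
modulo basepoint copies: nonnegative, symmetric, satisfies the triangle inequality, and
vanishes exactly when the two multisets agree up to adding copies of `e`. -/
theorem dN_well_defined_and_metric [MetricSpace X] (e : X) :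
    (∀ s t : Multiset X, dN e (s + {e}) t = dN e s t) ∧
    (∀ s t : Multiset X, dN e s (t + {e}) = dN e s t) ∧
    (∀ s t : Multiset X, 0 ≤ dN e s t) ∧
    (∀ s t : Multiset X, dN e s t = dN e t s) ∧
    (∀ s t u : Multiset X, dN e s u ≤ dN e s t + dN e t u) ∧
    (∀ s t : Multiset X, dN e s t = 0 ↔
      ∃ k j : ℕ, s + Multiset.replicate k e = t + Multiset.replicate j e) :=
  ⟨dN_add_singleton_left e,
    fun s t => by rw [dN_comm, dN_add_singleton_left, dN_comm],
    dN_nonneg e, dN_comm e, dN_triangle e, dN_eq_zero_iff e⟩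
end

section
/- On the set X* of sequences (xᵢ) in a pointed metric space (X,e) with Σᵢ d(xᵢ,e) < ∞, the function d̃_ℓ((xᵢ),(yᵢ)) := inf over bijections σ of ℕ of Σᵢ d(xᵢ, y_{σ(i)}) is finite and is a pseudometric (nonnegative, symmetric, satisfies the triangle inequality). -/
open Multiset Metric

variable {X : Type*}

open ENNReal

/-- The set `X*` of sequences with summable distance to the basepoint. -/
def Xstar [MetricSpace X] (e : X) : Type _ :=
  { f : ℕ → X // (∑' i, edist (f i) e) ≠ ⊤ }

/-- The extended matching pseudometric: infimum over bijections of `ℕ` of the matched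
sum of distances. -/
noncomputable def dtilde [MetricSpace X] (e : X) (f g : ℕ → X) : ℝ≥0∞ :=
  ⨅ σ : ℕ ≃ ℕ, ∑' i, edist (f i) (g (σ i))

lemma dtilde_symm_le [MetricSpace X] (e : X) (f g : ℕ → X) :
    dtilde e f g ≤ dtilde e g f := by
  refine le_iInf fun σ => ?_
  refine iInf_le_of_le σ.symm ?_
  rw [← σ.tsum_eq (fun i => edist (f i) (g (σ.symm i)))]
  simp [edist_comm]

/-- On sequences with finite ℓ¹-mass, the extended matching pseudometric `d̃_ℓ` is
finite, symmetric, and satisfies the triangle inequality (it is nonnegative since it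
takes values in `[0, ∞]`); hence it is a finite pseudometric on `X*`. -/
theorem dtilde_pseudometric [MetricSpace X] (e : X) (f g h : Xstar e) :
    dtilde e f.1 g.1 ≠ ⊤ ∧
    dtilde e f.1 g.1 = dtilde e g.1 f.1 ∧
    dtilde e f.1 h.1 ≤ dtilde e f.1 g.1 + dtilde e g.1 h.1 := by
  refine ⟨?_, le_antisymm (dtilde_symm_le e _ _) (dtilde_symm_le e _ _), ?_⟩
  · have : dtilde e f.1 g.1 ≤ ∑' i, edist (f.1 i) (g.1 i) :=
      iInf_le _ (Equiv.refl ℕ)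
    refine ne_top_of_le_ne_top ?_ this
    have hle : ∑' i, edist (f.1 i) (g.1 i) ≤
        (∑' i, edist (f.1 i) e) + ∑' i, edist (g.1 i) e := by
      rw [← ENNReal.tsum_add]
      exact ENNReal.tsum_le_tsum fun i => by
        calc edist (f.1 i) (g.1 i) ≤ edist (f.1 i) e + edist e (g.1 i) := edist_triangle _ _ _
        _ = edist (f.1 i) e + edist (g.1 i) e := by rw [edist_comm e]
    exact ne_top_of_le_ne_top (ENNReal.add_ne_top.2 ⟨f.2, g.2⟩) hle
  · rw [dtilde, dtilde, ENNReal.iInf_add]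
    refine le_iInf fun σ => ?_
    rw [dtilde, ENNReal.add_iInf]
    refine le_iInf fun τ => ?_
    refine iInf_le_of_le (σ.trans τ) (le_trans (ENNReal.tsum_le_tsum
      (fun i => edist_triangle (f.1 i) (g.1 (σ i)) (h.1 (τ (σ i))))) ?_)
    rw [ENNReal.tsum_add]
    rw [σ.tsum_eq (fun j => edist (g.1 j) (h.1 (τ j)))]
end
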